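/- arXiv:1703.04901 — 4 statements merged into one kernel-verified Lean document; each statement's English description precedes it below -/
import Mathlib

section
/- For every i ∈ {1, …, n} and every x ∈ Δ_n, the Lipschitz-type bound ‖F_c(x) − e_i‖ ≤ (2√2 / c_i)·‖x − e_i‖ holds, where ‖·‖ is the Euclidean norm; that is, F_c is Lipschitz continuous about the vertex e_i with Lipschitz constant 2√2/c_i. -/
open scoped Classical BigOperators

/-- The standard simplex Δₙ, inside Euclidean space ℝⁿ. -/
def DFsimplexE (n : ℕ) : Set (EuclideanSpace ℝ (Fin n)) :=
  {x | (∀ i, 0 ≤ x i) ∧ ∑ i, x i = 1}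

/-- αᶜ(x) = (∑ⱼ cⱼ/(1-xⱼ))⁻¹. -/
noncomputable def DFalphaE {n : ℕ} (c x : EuclideanSpace ℝ (Fin n)) : ℝ :=
  (∑ j, c j / (1 - x j))⁻¹

/-- The DeGroot–Friedkin map Fᶜ on Euclidean space: fixes the vertices eᵢ, and elsewhere
Fᶜ(x)ᵢ = αᶜ(x)·cᵢ/(1-xᵢ). -/
noncomputable def DFmapE {n : ℕ} (c x : EuclideanSpace ℝ (Fin n)) :
    EuclideanSpace ℝ (Fin n) :=
  if ∃ i, x = EuclideanSpace.single i 1 then x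
  else WithLp.toLp 2 (fun i => DFalphaE c x * (c i / (1 - x i)))

/-!
On the simplex the distance to a vertex is controlled by the deficit of its coordinate:
`1 - xᵢ ≤ ‖x - eᵢ‖ ≤ √2 (1 - xᵢ)`, the upper bound because `∑_{j ≠ i} xⱼ² ≤ (1 - xᵢ)²`.
As `F` maps the simplex into itself, it suffices to show `1 - F(x)ᵢ ≤ (2 / cᵢ)(1 - xᵢ)`.
With `d = 1 - xᵢ` and `T = ∑_{j ≠ i} cⱼ / (1 - xⱼ)` one has `1 - F(x)ᵢ = T / (cᵢ / d + T)`.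
If `2d ≥ cᵢ` this is at most `1 ≤ 2d / cᵢ`. Otherwise every `xⱼ` with `j ≠ i` is at most
`d < 1/2`, so `T ≤ 2` and `T / (cᵢ / d + T) ≤ T d / cᵢ ≤ 2d / cᵢ`.
At the vertices `F` is the identity and the constant `2√2 / cᵢ` is at least `1`.
-/

section Simplex

variable {ι : Type*} [Fintype ι] {x : EuclideanSpace ℝ ι}

lemma one_sub_apply_le_norm_sub_single [DecidableEq ι] (x : EuclideanSpace ℝ ι) (i : ι) :
    1 - x i ≤ ‖x - EuclideanSpace.single i 1‖ := by
  calc 1 - x i = (EuclideanSpace.single i (1 : ℝ) - x) i := by simp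
    _ ≤ ‖(EuclideanSpace.single i (1 : ℝ) - x) i‖ := Real.le_norm_self _
    _ ≤ ‖EuclideanSpace.single i 1 - x‖ := PiLp.norm_apply_le _ i
    _ = ‖x - EuclideanSpace.single i 1‖ := norm_sub_rev _ _

lemma apply_le_one (hx₀ : ∀ j, 0 ≤ x j) (hx₁ : ∑ j, x j = 1) (j : ι) : x j ≤ 1 :=
  hx₁ ▸ Finset.single_le_sum (fun k _ => hx₀ k) (Finset.mem_univ j)

lemma apply_le_one_sub_apply (hx₀ : ∀ j, 0 ≤ x j) (hx₁ : ∑ j, x j = 1) {i j : ι} (hji : j ≠ i) :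
    x j ≤ 1 - x i := by
  have : x i + x j ≤ ∑ k, x k :=
    Finset.add_le_sum (fun k _ => hx₀ k) (Finset.mem_univ i) (Finset.mem_univ j) hji.symm
  linarith

lemma eq_single_of_apply_eq_one [DecidableEq ι] (hx₀ : ∀ j, 0 ≤ x j) (hx₁ : ∑ j, x j = 1)
    {i : ι} (hi : x i = 1) : x = EuclideanSpace.single i 1 := by
  ext j
  rcases eq_or_ne j i with rfl | hji
  · simp [hi]
  · have := apply_le_one_sub_apply hx₀ hx₁ hji
    simp only [PiLp.single_apply, hji, if_false]
    linarith [hx₀ j]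

lemma apply_lt_one_of_not_exists_eq_single [DecidableEq ι] (hx₀ : ∀ j, 0 ≤ x j)
    (hx₁ : ∑ j, x j = 1) (hv : ¬∃ k, x = EuclideanSpace.single k 1) (j : ι) : x j < 1 :=
  lt_of_le_of_ne (apply_le_one hx₀ hx₁ j) fun h => hv ⟨j, eq_single_of_apply_eq_one hx₀ hx₁ h⟩

lemma norm_sub_single_le_sqrt_two_mul [DecidableEq ι] (hx₀ : ∀ j, 0 ≤ x j)
    (hx₁ : ∑ j, x j = 1) (i : ι) :
    ‖x - EuclideanSpace.single i 1‖ ≤ Real.sqrt 2 * (1 - x i) := by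
  have hrest : ∑ j ∈ Finset.univ.erase i, x j = 1 - x i := by
    rw [Finset.sum_erase_eq_sub (Finset.mem_univ i), hx₁]
  have hsq : ‖x - EuclideanSpace.single i 1‖ ^ 2 ≤ (Real.sqrt 2 * (1 - x i)) ^ 2 := by
    rw [EuclideanSpace.real_norm_sq_eq, ← Finset.add_sum_erase _ _ (Finset.mem_univ i),
      mul_pow, Real.sq_sqrt zero_le_two]
    have hoff : ∑ j ∈ Finset.univ.erase i, (x - EuclideanSpace.single i (1 : ℝ)) j ^ 2
        = ∑ j ∈ Finset.univ.erase i, x j ^ 2 :=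
      Finset.sum_congr rfl fun j hj => by simp [Finset.ne_of_mem_erase hj]
    have := Finset.sum_sq_le_sq_sum_of_nonneg (s := Finset.univ.erase i) fun j _ => hx₀ j
    rw [hoff, PiLp.sub_apply, PiLp.single_apply, if_pos rfl]
    rw [hrest] at this
    nlinarith
  have : 0 ≤ Real.sqrt 2 * (1 - x i) :=
    mul_nonneg (Real.sqrt_nonneg 2) (sub_nonneg.mpr (apply_le_one hx₀ hx₁ i))
  exact (pow_le_pow_iff_left₀ (norm_nonneg _) this two_ne_zero).mp hsq

lemma sum_erase_div_one_sub_le_two [DecidableEq ι] {c : EuclideanSpace ℝ ι} (hc₀ : ∀ j, 0 ≤ c j)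
    (hc₁ : ∑ j, c j = 1) (hx₀ : ∀ j, 0 ≤ x j) (hx₁ : ∑ j, x j = 1) {i : ι}
    (hi : 2 * (1 - x i) ≤ 1) :
    ∑ j ∈ Finset.univ.erase i, c j / (1 - x j) ≤ 2 := by
  have hterm : ∀ j ∈ Finset.univ.erase i, c j / (1 - x j) ≤ 2 * c j := fun j hj => by
    have := apply_le_one_sub_apply hx₀ hx₁ (Finset.ne_of_mem_erase hj)
    rw [div_le_iff₀ (by linarith)]
    nlinarith [hc₀ j]
  calc ∑ j ∈ Finset.univ.erase i, c j / (1 - x j)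
      ≤ ∑ j ∈ Finset.univ.erase i, 2 * c j := Finset.sum_le_sum hterm
    _ = 2 * (1 - c i) := by rw [← Finset.mul_sum, Finset.sum_erase_eq_sub (Finset.mem_univ i), hc₁]
    _ ≤ 2 := by linarith [hc₀ i]

end Simplex

section DeGrootFriedkin

variable {n : ℕ} {c x : EuclideanSpace ℝ (Fin n)}

lemma DFmapE_of_forall_lt_one (hx : ∀ j, x j < 1) :
    DFmapE c x = WithLp.toLp 2 (fun j => DFalphaE c x * (c j / (1 - x j))) := by
  rw [DFmapE, if_neg]
  rintro ⟨k, rfl⟩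
  simpa using hx k

lemma sum_div_one_sub_pos (hc : ∀ j, 0 < c j) (hlt : ∀ j, x j < 1) (i : Fin n) :
    0 < ∑ j, c j / (1 - x j) :=
  Finset.sum_pos (fun j _ => div_pos (hc j) (sub_pos.2 (hlt j))) ⟨i, Finset.mem_univ i⟩

lemma DFmapE_mem_DFsimplexE (hc : ∀ j, 0 < c j) (hx : x ∈ DFsimplexE n) :
    DFmapE c x ∈ DFsimplexE n := by
  obtain ⟨hx₀, hx₁⟩ := hx
  by_cases hv : ∃ k, x = EuclideanSpace.single k 1
  · rw [DFmapE, if_pos hv]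
    exact ⟨hx₀, hx₁⟩
  have hlt := apply_lt_one_of_not_exists_eq_single hx₀ hx₁ hv
  obtain ⟨i, -, -⟩ := Finset.exists_ne_zero_of_sum_ne_zero (hx₁ ▸ one_ne_zero)
  have hS := sum_div_one_sub_pos hc hlt i
  rw [DFmapE_of_forall_lt_one hlt]
  refine ⟨fun j => mul_nonneg (inv_nonneg.2 hS.le) (div_pos (hc j) (sub_pos.2 (hlt j))).le, ?_⟩
  simp only [← Finset.mul_sum, DFalphaE, inv_mul_cancel₀ hS.ne']

lemma one_sub_DFmapE_apply_le (hc : ∀ j, 0 < c j) (hc₁ : ∑ j, c j = 1) (hx : x ∈ DFsimplexE n)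
    (hlt : ∀ j, x j < 1) (i : Fin n) :
    1 - DFmapE c x i ≤ 2 / c i * (1 - x i) := by
  obtain ⟨hx₀, hx₁⟩ := hx
  have hd : 0 < 1 - x i := sub_pos.2 (hlt i)
  set T := ∑ j ∈ Finset.univ.erase i, c j / (1 - x j)
  have hST : ∑ j, c j / (1 - x j) = c i / (1 - x i) + T :=
    (Finset.add_sum_erase _ _ (Finset.mem_univ i)).symm
  have hT₀ : 0 ≤ T := Finset.sum_nonneg fun j _ => (div_pos (hc j) (sub_pos.2 (hlt j))).le
  have ha : 0 < c i / (1 - x i) := div_pos (hc i) hd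
  have hF : 1 - DFmapE c x i = T / (c i / (1 - x i) + T) := by
    rw [DFmapE_of_forall_lt_one hlt, WithLp.ofLp_toLp, DFalphaE, hST]
    have hS : 0 < c i / (1 - x i) + T := add_pos_of_pos_of_nonneg ha hT₀
    generalize c i / (1 - x i) = a at hS ⊢
    field_simp
    ring
  rw [hF]
  rcases le_or_gt (c i) (2 * (1 - x i)) with hfar | hnear
  · calc T / (c i / (1 - x i) + T) ≤ 1 := div_le_one_of_le₀ (by linarith) (by linarith)
      _ ≤ 2 / c i * (1 - x i) := by rw [div_mul_eq_mul_div, le_div_iff₀ (hc i)]; linarith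
  · have hT := sum_erase_div_one_sub_le_two (fun j => (hc j).le) hc₁ hx₀ hx₁
      (i := i) (by linarith [apply_le_one (fun j => (hc j).le) hc₁ i])
    calc T / (c i / (1 - x i) + T) ≤ T / (c i / (1 - x i)) :=
          div_le_div_of_nonneg_left hT₀ ha (by linarith)
      _ = T / c i * (1 - x i) := by field_simp
      _ ≤ 2 / c i * (1 - x i) := by gcongr; exact (hc i).le

end DeGrootFriedkin

theorem stmt_4_general (n : ℕ) (c : EuclideanSpace ℝ (Fin n))
    (hc : ∀ i, 0 < c i) (hcsum : ∑ i, c i = 1) :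
    ∀ i : Fin n, ∀ x ∈ DFsimplexE n,
      ‖DFmapE c x - EuclideanSpace.single i 1‖ ≤
        (2 * Real.sqrt 2 / c i) * ‖x - EuclideanSpace.single i 1‖ := by
  intro i x hx
  by_cases hv : ∃ k, x = EuclideanSpace.single k 1
  · have hci : c i ≤ 1 := apply_le_one (fun j => (hc j).le) hcsum i
    have hK : 1 ≤ 2 * Real.sqrt 2 / c i := by
      rw [one_le_div (hc i)]
      linarith [Real.one_lt_sqrt_two]
    rw [DFmapE, if_pos hv]
    exact le_mul_of_one_le_left (norm_nonneg _) hK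
  have hlt := apply_lt_one_of_not_exists_eq_single hx.1 hx.2 hv
  obtain ⟨hy₀, hy₁⟩ := DFmapE_mem_DFsimplexE hc hx
  calc ‖DFmapE c x - EuclideanSpace.single i 1‖
      ≤ Real.sqrt 2 * (1 - DFmapE c x i) := norm_sub_single_le_sqrt_two_mul hy₀ hy₁ i
    _ ≤ Real.sqrt 2 * (2 / c i * (1 - x i)) := by
        gcongr
        exact one_sub_DFmapE_apply_le hc hcsum hx hlt i
    _ = 2 * Real.sqrt 2 / c i * (1 - x i) := by ring
    _ ≤ 2 * Real.sqrt 2 / c i * ‖x - EuclideanSpace.single i 1‖ := by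
        have := hc i
        gcongr
        exact one_sub_apply_le_norm_sub_single x i

/-- For every vertex eᵢ and every x ∈ Δₙ, ‖Fᶜ(x) - eᵢ‖ ≤ (2√2/cᵢ)·‖x - eᵢ‖, i.e. Fᶜ is
Lipschitz continuous about eᵢ with Lipschitz constant 2√2/cᵢ (Euclidean norm). -/
theorem stmt_4 (n : ℕ) (hn : 3 ≤ n) (c : EuclideanSpace ℝ (Fin n))
    (hc : ∀ i, 0 < c i) (hcsum : ∑ i, c i = 1) :
    ∀ i : Fin n, ∀ x ∈ DFsimplexE n,
      ‖DFmapE c x - EuclideanSpace.single i 1‖ ≤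
        (2 * Real.sqrt 2 / c i) * ‖x - EuclideanSpace.single i 1‖ :=
  stmt_4_general n c hc hcsum
end

section
/- (Property P3) Let c¹ and c² be two weight vectors in ℝ^n with strictly positive entries each summing to 1. The composition F_{c²} ∘ F_{c¹} : Δ_n → Δ_n is continuous on all of Δ_n. -/
open scoped Classical BigOperators

/-- The standard simplex Δₙ in ℝⁿ. -/
def DFsimplex (n : ℕ) : Set (Fin n → ℝ) :=
  {x | (∀ i, 0 ≤ x i) ∧ ∑ i, x i = 1}

/-- Δ̃ₙ : the simplex with its vertices removed, i.e. points of Δₙ with all coordinates < 1. -/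
def DFsimplexTilde (n : ℕ) : Set (Fin n → ℝ) :=
  {x | x ∈ DFsimplex n ∧ ∀ i, x i < 1}

/-- int(Δₙ) : points of Δₙ with all coordinates > 0. -/
def DFsimplexInt (n : ℕ) : Set (Fin n → ℝ) :=
  {x | x ∈ DFsimplex n ∧ ∀ i, 0 < x i}

/-- αᶜ(x) = (∑ⱼ cⱼ/(1-xⱼ))⁻¹. -/
noncomputable def DFalpha {n : ℕ} (c x : Fin n → ℝ) : ℝ :=
  (∑ j, c j / (1 - x j))⁻¹

/-- The DeGroot–Friedkin map Fᶜ : fixes the vertices eᵢ, and elsewhere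
Fᶜ(x)ᵢ = αᶜ(x)·cᵢ/(1-xᵢ). -/
noncomputable def DFmap {n : ℕ} (c : Fin n → ℝ) (x : Fin n → ℝ) : Fin n → ℝ :=
  if ∃ i, x = Pi.single i 1 then x
  else fun i => DFalpha c x * (c i / (1 - x i))

/-! On `Δₙ`, multiplying numerator and denominator of `F_c(x)ᵢ` by `∏ⱼ (1 - xⱼ)` gives
`F_c(x)ᵢ = cᵢ ∏_{j ≠ i} (1 - xⱼ) / ∑ₖ cₖ ∏_{j ≠ k} (1 - xⱼ)`, and this rational expression
also takes the value `eᵢ` at the vertex `eᵢ`. Its denominator is positive on all of `Δₙ`, because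
at most one coordinate of a point of `Δₙ` equals `1`. Hence each `F_c` is a continuous self-map
of `Δₙ`, and so is the composition. -/

open Finset

section StdSimplex

variable {ι : Type*} [Fintype ι] {x : ι → ℝ}

lemma add_le_one_of_mem_stdSimplex (hx : x ∈ stdSimplex ℝ ι) {i j : ι} (hij : i ≠ j) :
    x i + x j ≤ 1 := by
  rw [← sum_pair hij, ← hx.2]
  exact sum_le_univ_sum_of_nonneg hx.1

lemma eq_single_of_mem_stdSimplex [DecidableEq ι] (hx : x ∈ stdSimplex ℝ ι) {i : ι}
    (hi : x i = 1) : x = Pi.single i 1 := by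
  funext j
  rcases eq_or_ne j i with rfl | hji
  · simp [hi]
  · have := add_le_one_of_mem_stdSimplex hx hji
    rw [Pi.single_eq_of_ne hji]
    linarith [hx.1 j]

lemma exists_forall_ne_lt_one_of_mem_stdSimplex (hx : x ∈ stdSimplex ℝ ι) :
    ∃ k, ∀ j ≠ k, x j < 1 := by
  by_cases h : ∃ k, x k = 1
  · obtain ⟨k, hk⟩ := h
    refine ⟨k, fun j hjk => ?_⟩
    linarith [add_le_one_of_mem_stdSimplex hx hjk, hx.1 k]
  · obtain ⟨k⟩ : Nonempty ι := by
      by_contra hι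
      simpa [not_nonempty_iff.1 hι] using hx.2
    simp only [not_exists] at h
    exact ⟨k, fun j _ => (mem_Icc_of_mem_stdSimplex hx j).2.lt_of_ne (h j)⟩

end StdSimplex

noncomputable def DFweight {ι : Type*} [Fintype ι] [DecidableEq ι] (c x : ι → ℝ) (i : ι) : ℝ :=
  c i * ∏ j ∈ univ.erase i, (1 - x j)

section DFweight

variable {ι : Type*} [Fintype ι] [DecidableEq ι] {c x : ι → ℝ}

lemma DFweight_single (c : ι → ℝ) (i : ι) : DFweight c (Pi.single i 1) = Pi.single i (c i) := by
  funext k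
  rcases eq_or_ne k i with rfl | hki
  · rw [DFweight, Pi.single_eq_same,
      prod_eq_one fun j hj => by simp [Pi.single_eq_of_ne (ne_of_mem_erase hj)], mul_one]
  · rw [Pi.single_eq_of_ne hki, DFweight, prod_eq_zero (mem_erase.2 ⟨hki.symm, mem_univ i⟩)
      (by simp), mul_zero]

lemma DFweight_eq_mul_prod (hx : ∀ j, x j ≠ 1) (i : ι) :
    DFweight c x i = c i / (1 - x i) * ∏ j, (1 - x j) := by
  have hi : 1 - x i ≠ 0 := sub_ne_zero.2 (hx i).symm
  rw [DFweight, ← mul_prod_erase univ _ (mem_univ i)]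
  field_simp

lemma DFweight_nonneg (hc : ∀ i, 0 ≤ c i) (hx : x ∈ stdSimplex ℝ ι) (i : ι) :
    0 ≤ DFweight c x i :=
  mul_nonneg (hc i) (prod_nonneg fun j _ => sub_nonneg.2 (mem_Icc_of_mem_stdSimplex hx j).2)

lemma sum_DFweight_pos (hc : ∀ i, 0 < c i) (hx : x ∈ stdSimplex ℝ ι) :
    0 < ∑ i, DFweight c x i := by
  obtain ⟨k, hk⟩ := exists_forall_ne_lt_one_of_mem_stdSimplex hx
  refine sum_pos' (fun i _ => DFweight_nonneg (fun j => (hc j).le) hx i) ⟨k, mem_univ k, ?_⟩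
  exact mul_pos (hc k) (prod_pos fun j hj => sub_pos.2 (hk j (ne_of_mem_erase hj)))

lemma continuous_DFweight (c : ι → ℝ) (i : ι) : Continuous fun x => DFweight c x i := by
  unfold DFweight
  fun_prop

end DFweight

section DFmap

variable {n : ℕ} {c : Fin n → ℝ}

lemma DFmap_eq_DFweight_div (hc : ∀ i, c i ≠ 0) {x : Fin n → ℝ} (hx : x ∈ DFsimplex n) :
    DFmap c x = fun i => DFweight c x i / ∑ j, DFweight c x j := by
  by_cases hv : ∃ i, x = Pi.single i 1
  · obtain ⟨i, rfl⟩ := hv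
    rw [DFmap, if_pos ⟨i, rfl⟩, DFweight_single, sum_pi_single', if_pos (mem_univ i)]
    funext k
    rcases eq_or_ne k i with rfl | hki
    · rw [Pi.single_eq_same, Pi.single_eq_same, div_self (hc k)]
    · rw [Pi.single_eq_of_ne hki, Pi.single_eq_of_ne hki, zero_div]
  · have hx1 : ∀ j, x j ≠ 1 := fun j hj => hv ⟨j, eq_single_of_mem_stdSimplex hx hj⟩
    have hprod : ∏ j, (1 - x j) ≠ 0 := prod_ne_zero_iff.2 fun j _ => sub_ne_zero.2 (hx1 j).symm
    funext i
    simp only [DFmap, if_neg hv, DFweight_eq_mul_prod hx1]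
    rw [← sum_mul, mul_div_mul_right _ _ hprod, DFalpha, inv_mul_eq_div]

lemma mapsTo_DFmap (hc : ∀ i, 0 < c i) : Set.MapsTo (DFmap c) (DFsimplex n) (DFsimplex n) := by
  intro x hx
  rw [DFmap_eq_DFweight_div (fun i => (hc i).ne') hx]
  have hsum := sum_DFweight_pos hc hx
  refine ⟨fun i => div_nonneg (DFweight_nonneg (fun j => (hc j).le) hx i) hsum.le, ?_⟩
  rw [← sum_div, div_self hsum.ne']

lemma continuousOn_DFmap (hc : ∀ i, 0 < c i) : ContinuousOn (DFmap c) (DFsimplex n) := by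
  refine ContinuousOn.congr ?_ fun x hx => DFmap_eq_DFweight_div (fun i => (hc i).ne') hx
  refine continuousOn_pi.2 fun i => ContinuousOn.div (continuous_DFweight c i).continuousOn
    (continuous_finsetSum _ fun j _ => continuous_DFweight c j).continuousOn
    fun x hx => (sum_DFweight_pos hc hx).ne'

end DFmap

theorem stmt_5_general (n : ℕ) (c₁ c₂ : Fin n → ℝ)
    (hc₁ : ∀ i, 0 < c₁ i) (hc₂ : ∀ i, 0 < c₂ i) :
    Set.MapsTo (DFmap c₂ ∘ DFmap c₁) (DFsimplex n) (DFsimplex n) ∧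
    ContinuousOn (DFmap c₂ ∘ DFmap c₁) (DFsimplex n) :=
  ⟨(mapsTo_DFmap hc₂).comp (mapsTo_DFmap hc₁),
    (continuousOn_DFmap hc₂).comp (continuousOn_DFmap hc₁) (mapsTo_DFmap hc₁)⟩

/-- Property P3: the composition F_{c²} ∘ F_{c¹} : Δₙ → Δₙ is continuous on all of Δₙ. -/
theorem stmt_5 (n : ℕ) (hn : 3 ≤ n) (c₁ c₂ : Fin n → ℝ)
    (hc₁ : ∀ i, 0 < c₁ i) (hc₁sum : ∑ i, c₁ i = 1)
    (hc₂ : ∀ i, 0 < c₂ i) (hc₂sum : ∑ i, c₂ i = 1) :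
    Set.MapsTo (DFmap c₂ ∘ DFmap c₁) (DFsimplex n) (DFsimplex n) ∧
    ContinuousOn (DFmap c₂ ∘ DFmap c₁) (DFsimplex n) :=
  stmt_5_general n c₁ c₂ hc₁ hc₂
end

section
/- (Property P4) Let c¹ and c² be two weight vectors in ℝ^n with strictly positive entries each summing to 1, and suppose c¹_i < 1/2 and c²_i < 1/2 for all i. Then the composition F_{c²} ∘ F_{c¹} has at least one fixed point y* ∈ int(Δ_n), i.e. there exists y* ∈ Δ_n with y*_i > 0 for all i and F_{c²}(F_{c¹}(y*)) = y*. -/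
open scoped Classical BigOperators

/-!
The argument is a contraction in Hilbert's projective metric. Off the vertices,
`F_c(x)_i ∝ c_i / (1 - x_i)`, and coordinatewise inversion, multiplication by `c` and
normalisation do not change Hilbert distances, so everything hinges on the linear map
`x ↦ 1 - x`, i.e. `x_i ↦ ∑_{j ≠ i} x_j`. For `n ≥ 3` it shrinks the distance by the factor
`1 - δ` between points of the simplex whose coordinates are at least `δ`. If all weights are
below `m < 1/2`, then for `b = m / (1 - m) < 1` and `δ > 0` small both maps send the box
`δ ≤ x_i ≤ b` of the simplex into itself; the iterates of `F_{c₂} ∘ F_{c₁}` therefore form a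
Cauchy sequence whose limit is a fixed point with positive coordinates.
-/

theorem le_one_of_mem_DFsimplex {n : ℕ} {x : Fin n → ℝ} (hx : x ∈ DFsimplex n) (i : Fin n) :
    x i ≤ 1 :=
  hx.2 ▸ Finset.single_le_sum (fun j _ => hx.1 j) (Finset.mem_univ i)

/-- `HilbertLE ρ x y` says that `max (x / y) ≤ ρ * min (x / y)` for positive vectors, i.e. that
the Hilbert projective distance between `x` and `y` is at most `log ρ`. -/
def HilbertLE {n : ℕ} (ρ : ℝ) (x y : Fin n → ℝ) : Prop :=
  ∀ i j, x i * y j ≤ ρ * (y i * x j)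

namespace HilbertLE

variable {n : ℕ} {ρ : ℝ} {x y : Fin n → ℝ}

theorem symm (h : HilbertLE ρ x y) : HilbertLE ρ y x := fun i j => by
  linarith [h j i]

theorem le_mul (h : HilbertLE ρ x y) (hx : ∑ j, x j = 1) (hy : ∑ j, y j = 1) (i : Fin n) :
    x i ≤ ρ * y i :=
  calc x i = ∑ j, x i * y j := by rw [← Finset.mul_sum, hy, mul_one]
    _ ≤ ∑ j, ρ * (y i * x j) := Finset.sum_le_sum fun j _ => h i j
    _ = ρ * y i := by rw [← Finset.mul_sum, ← Finset.mul_sum, hx, mul_one]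

theorem one_le (h : HilbertLE ρ x y) (hx : ∑ j, x j = 1) (hy : ∑ j, y j = 1) : 1 ≤ ρ :=
  calc 1 = ∑ i, ∑ j, x i * y j := by rw [← Finset.sum_mul_sum, hx, hy, mul_one]
    _ ≤ ∑ i, ∑ j, ρ * (y i * x j) := Finset.sum_le_sum fun i _ => Finset.sum_le_sum fun j _ => h i j
    _ = ρ := by simp only [← Finset.mul_sum, hx, hy, mul_one]

theorem dist_le (h : HilbertLE ρ x y) (hx : x ∈ DFsimplex n) (hy : y ∈ DFsimplex n) :
    dist x y ≤ ρ - 1 := by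
  have hρ := h.one_le hx.2 hy.2
  refine (dist_pi_le_iff (by linarith)).2 fun i => ?_
  rw [Real.dist_eq, abs_le]
  constructor <;> nlinarith [h.le_mul hx.2 hy.2 i, h.symm.le_mul hy.2 hx.2 i,
    le_one_of_mem_DFsimplex hx i, le_one_of_mem_DFsimplex hy i]

end HilbertLE

theorem hilbertLE_of_mem_Icc {n : ℕ} {δ : ℝ} {x y : Fin n → ℝ} (hδ : 0 < δ)
    (hx : ∀ i, x i ∈ Set.Icc δ 1) (hy : ∀ i, y i ∈ Set.Icc δ 1) :
    HilbertLE (δ ^ 2)⁻¹ x y := fun i j =>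
  calc x i * y j ≤ 1 := mul_le_one₀ (hx i).2 (hδ.le.trans (hy j).1) (hy j).2
    _ = (δ ^ 2)⁻¹ * (δ * δ) := by field_simp
    _ ≤ (δ ^ 2)⁻¹ * (y i * x j) := by
      gcongr
      exacts [hδ.le.trans (hy i).1, (hy i).1, (hx j).1]

/-- In `HilbertLE.one_sub_contract`, `S` and `T` are the sums `1 - y i` and `1 - y j` with the
common term `w = y k`, and `z = x k`. -/
theorem contraction_inequality {a ρ θ w z S T : ℝ} (hθ0 : 0 ≤ θ) (hθ1 : θ ≤ 1) (hρ : 1 ≤ ρ)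
    (hw : 0 < w) (hSw : θ * S ≤ w) (hTw : θ * T ≤ w) (hS : 0 ≤ S) (hT : 0 ≤ T)
    (hza : a * w ≤ z) (hzρ : z ≤ ρ * a * w) :
    (z + ρ * a * (S - w)) * T ≤ (1 + (1 - θ) * (ρ - 1)) * (S * (z + a * (T - w))) := by
  have h₁ : 0 ≤ (w - θ * S) * (ρ * a * w - z) := mul_nonneg (by linarith) (by linarith)
  have h₂ : 0 ≤ (w - θ * T) * (z - a * w) := mul_nonneg (by linarith) (by linarith)
  have h₃ : 0 ≤ θ * (1 - θ) * (ρ - 1) * (z - a * w) := by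
    have := mul_nonneg hθ0 (sub_nonneg.2 hθ1)
    have := mul_nonneg this (sub_nonneg.2 hρ)
    exact mul_nonneg this (by linarith)
  have hq : 0 ≤ 1 + (1 - θ) * (ρ - 1) := by nlinarith
  refine le_of_mul_le_mul_right ?_ hw
  calc (z + ρ * a * (S - w)) * T * w ≤ S * T * ((1 - θ) * ρ * a * w + θ * z) := by
        nlinarith [mul_nonneg hT h₁]
    _ ≤ (1 + (1 - θ) * (ρ - 1)) * (S * T * ((1 - θ) * a * w + θ * z)) := by
        nlinarith [mul_nonneg (mul_nonneg hS hT) h₃]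
    _ ≤ (1 + (1 - θ) * (ρ - 1)) * (S * (z + a * (T - w))) * w := by
        nlinarith [mul_nonneg (mul_nonneg hS hq) h₂]

theorem one_sub_eq_sum_erase {n : ℕ} {x : Fin n → ℝ} (hx : ∑ j, x j = 1) (i : Fin n) :
    1 - x i = ∑ j ∈ Finset.univ.erase i, x j := by
  rw [Finset.sum_erase_eq_sub (Finset.mem_univ i), hx]

/-- On the simplex `1 - x i = ∑_{j ≠ i} x j`. For `i ≠ j` and `n ≥ 3` the two sums share a term
`k ∉ {i, j}` of relative weight at least `δ`, which forces the ratios `(1 - x i) / (1 - y i)`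
closer together than the ratios `x i / y i`. -/
theorem HilbertLE.one_sub_contract {n : ℕ} (hn : 3 ≤ n) {ρ δ : ℝ} {x y : Fin n → ℝ}
    (h : HilbertLE ρ x y) (hx : x ∈ DFsimplex n) (hy : y ∈ DFsimplex n) (hδ : 0 < δ)
    (hδy : ∀ i, δ ≤ y i) :
    HilbertLE (1 + (1 - δ) * (ρ - 1)) (fun i => 1 - x i) (fun i => 1 - y i) := by
  have hρ := h.one_le hx.2 hy.2
  have hx1 : ∀ i, 0 ≤ 1 - x i := fun i => sub_nonneg.2 (le_one_of_mem_DFsimplex hx i)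
  have hy1 : ∀ i, 0 ≤ 1 - y i := fun i => sub_nonneg.2 (le_one_of_mem_DFsimplex hy i)
  have hy0 : ∀ i, 0 < y i := fun i => hδ.trans_le (hδy i)
  have hδ1 : δ ≤ 1 := (hδy ⟨0, by omega⟩).trans (le_one_of_mem_DFsimplex hy _)
  have : Nonempty (Fin n) := ⟨⟨0, by omega⟩⟩
  obtain ⟨l, hl⟩ := Finite.exists_min fun j => x j / y j
  set a := x l / y l with ha
  have hax : ∀ j, a * y j ≤ x j := fun j => (le_div_iff₀ (hy0 j)).1 (hl j)
  have hxρ : ∀ j, x j ≤ ρ * a * y j := fun j => by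
    rw [ha, show ρ * (x l / y l) * y j = ρ * (y j * x l) / y l by ring, le_div_iff₀ (hy0 l)]
    exact h j l
  have hsum : ∀ t i, ∑ j ∈ Finset.univ.erase i, (x j - t * y j) = (1 - x i) - t * (1 - y i) :=
    fun t i => by
      rw [Finset.sum_sub_distrib, ← Finset.mul_sum, one_sub_eq_sum_erase hx.2,
        one_sub_eq_sum_erase hy.2]
  intro i j
  rcases eq_or_ne i j with rfl | hij
  · nlinarith [mul_nonneg (hx1 i) (hy1 i), mul_nonneg (sub_nonneg.2 hδ1) (sub_nonneg.2 hρ)]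
  obtain ⟨k, hki, hkj⟩ := Fin.exists_ne_and_ne_of_two_lt i j (by omega)
  have hupper : 1 - x i ≤ x k + ρ * a * ((1 - y i) - y k) := by
    have := Finset.single_le_sum (f := fun j => -(x j - ρ * a * y j))
      (fun j _ => by linarith [hxρ j]) (Finset.mem_erase.2 ⟨hki, Finset.mem_univ k⟩)
    rw [Finset.sum_neg_distrib, hsum] at this
    linarith
  have hlower : x k + a * ((1 - y j) - y k) ≤ 1 - x j := by
    have := Finset.single_le_sum (f := fun j => x j - a * y j)
      (fun j _ => by linarith [hax j]) (Finset.mem_erase.2 ⟨hkj, Finset.mem_univ k⟩)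
    rw [hsum] at this
    linarith
  have hq : 0 ≤ 1 + (1 - δ) * (ρ - 1) := by nlinarith
  calc (1 - x i) * (1 - y j) ≤ (x k + ρ * a * ((1 - y i) - y k)) * (1 - y j) :=
      mul_le_mul_of_nonneg_right hupper (hy1 j)
    _ ≤ (1 + (1 - δ) * (ρ - 1)) * ((1 - y i) * (x k + a * ((1 - y j) - y k))) :=
      contraction_inequality hδ.le hδ1 hρ (hy0 k)
        (by nlinarith [hδy k, mul_nonneg hδ.le (hy0 i).le])
        (by nlinarith [hδy k, mul_nonneg hδ.le (hy0 j).le]) (hy1 i) (hy1 j) (hax k) (hxρ k)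
    _ ≤ (1 + (1 - δ) * (ρ - 1)) * ((1 - y i) * (1 - x j)) :=
      mul_le_mul_of_nonneg_left (mul_le_mul_of_nonneg_left hlower (hy1 i)) hq

section DFmap

variable {n : ℕ} {c x : Fin n → ℝ}

theorem DFmap_of_forall_lt_one (hx : ∀ i, x i < 1) :
    DFmap c x = fun i => c i / (1 - x i) / ∑ j, c j / (1 - x j) := by
  rw [DFmap, if_neg]
  · ext i
    rw [DFalpha]
    ring
  · rintro ⟨i, rfl⟩
    simpa using hx i

theorem one_le_sum_div_one_sub (hc : ∀ j, 0 ≤ c j) (hcs : ∑ j, c j = 1)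
    (hx : x ∈ DFsimplexTilde n) : 1 ≤ ∑ j, c j / (1 - x j) :=
  hcs ▸ Finset.sum_le_sum fun j _ =>
    le_div_self (hc j) (by linarith [hx.2 j]) (by linarith [hx.1.1 j])

theorem sum_DFmap (hc : ∀ j, 0 ≤ c j) (hcs : ∑ j, c j = 1) (hx : x ∈ DFsimplexTilde n) :
    ∑ i, DFmap c x i = 1 := by
  rw [DFmap_of_forall_lt_one hx.2, ← Finset.sum_div]
  exact div_self (by linarith [one_le_sum_div_one_sub hc hcs hx])

theorem mul_one_sub_le_DFmap {b : ℝ} (hc : ∀ j, 0 ≤ c j) (hcs : ∑ j, c j = 1)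
    (hx : x ∈ DFsimplex n) (hb : b < 1) (hxb : ∀ j, x j ≤ b) (i : Fin n) :
    c i * (1 - b) ≤ DFmap c x i := by
  have hx1 : ∀ j, x j < 1 := fun j => (hxb j).trans_lt hb
  have hD := one_le_sum_div_one_sub hc hcs ⟨hx, hx1⟩
  have hDb : (∑ j, c j / (1 - x j)) * (1 - b) ≤ 1 := by
    rw [← le_div_iff₀ (by linarith), ← hcs, Finset.sum_div]
    exact Finset.sum_le_sum fun j _ =>
      div_le_div_of_nonneg_left (hc j) (by linarith) (by linarith [hxb j])
  rw [DFmap_of_forall_lt_one hx1]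
  calc c i * (1 - b) ≤ c i / ∑ j, c j / (1 - x j) := by
        rw [le_div_iff₀ (by linarith)]
        nlinarith [hc i]
    _ ≤ c i / (1 - x i) / ∑ j, c j / (1 - x j) := by
        gcongr
        exact le_div_self (hc i) (by linarith [hx1 i]) (by linarith [hx.1 i])

theorem DFmap_le {b : ℝ} (hc : ∀ j, 0 ≤ c j) (hcs : ∑ j, c j = 1)
    (hx : x ∈ DFsimplex n) (hb : b < 1) (hxb : ∀ j, x j ≤ b) {i : Fin n}
    (hcb : c i ≤ b * (1 - c i)) : DFmap c x i ≤ b := by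
  have hx1 : ∀ j, x j < 1 := fun j => (hxb j).trans_lt hb
  have hD := one_le_sum_div_one_sub hc hcs ⟨hx, hx1⟩
  set q := c i / (1 - x i)
  have hqD : q + (1 - c i) ≤ ∑ j, c j / (1 - x j) := by
    rw [← Finset.add_sum_erase _ _ (Finset.mem_univ i), one_sub_eq_sum_erase hcs]
    gcongr with j
    exact le_div_self (hc j) (by linarith [hx1 j]) (by linarith [hx.1 j])
  have hq : q * (1 - b) ≤ c i := by
    rw [div_mul_eq_mul_div, div_le_iff₀ (by linarith [hx1 i])]
    nlinarith [hc i, hxb i]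
  have hb0 : 0 ≤ b := (hx.1 i).trans (hxb i)
  rw [DFmap_of_forall_lt_one hx1, div_le_iff₀ (by linarith)]
  nlinarith [mul_le_mul_of_nonneg_left hqD hb0]

theorem continuousAt_DFmap (hc : ∀ j, 0 ≤ c j) (hcs : ∑ j, c j = 1)
    (hx : x ∈ DFsimplexTilde n) : ContinuousAt (DFmap c) x := by
  have hD := one_le_sum_div_one_sub hc hcs hx
  have hnhds : ∀ᶠ y in nhds x, ∀ i, y i < 1 :=
    Filter.eventually_all.2 fun i =>
      (continuous_apply i).continuousAt.eventually_lt continuousAt_const (hx.2 i)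
  refine ContinuousAt.congr ?_ (hnhds.mono fun y hy => (DFmap_of_forall_lt_one hy).symm)
  have hx1 : ∀ i, 1 - x i ≠ 0 := fun i => by linarith [hx.2 i]
  have hD0 : ∑ j, c j / (1 - x j) ≠ 0 := by linarith
  have hterm : ∀ j, ContinuousAt (fun y : Fin n → ℝ => c j / (1 - y j)) x := fun j =>
    continuousAt_const.div (continuousAt_const.sub (continuous_apply j).continuousAt) (hx1 j)
  have hsum : ContinuousAt (fun y : Fin n → ℝ => ∑ j, c j / (1 - y j)) x :=
    tendsto_finsetSum _ fun j _ => hterm j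
  exact continuousAt_pi.2 fun i => (hterm i).div hsum hD0

theorem hilbertLE_DFmap {y : Fin n → ℝ} {ρ : ℝ} (hc : ∀ j, 0 ≤ c j) (hx : ∀ i, x i < 1)
    (hy : ∀ i, y i < 1) (h : HilbertLE ρ (fun i => 1 - y i) (fun i => 1 - x i)) :
    HilbertLE ρ (DFmap c x) (DFmap c y) := by
  rw [DFmap_of_forall_lt_one hx, DFmap_of_forall_lt_one hy]
  intro i j
  set Dx := ∑ j, c j / (1 - x j)
  set Dy := ∑ j, c j / (1 - y j)
  have hDx : 0 ≤ Dx := Finset.sum_nonneg fun j _ => div_nonneg (hc j) (by linarith [hx j])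
  have hDy : 0 ≤ Dy := Finset.sum_nonneg fun j _ => div_nonneg (hc j) (by linarith [hy j])
  have hK : 0 ≤ c i * c j / (Dx * Dy) := by have := hc i; have := hc j; positivity
  have key : 1 / ((1 - x i) * (1 - y j)) ≤ ρ / ((1 - y i) * (1 - x j)) := by
    rw [div_le_div_iff₀ (mul_pos (by linarith [hx i]) (by linarith [hy j]))
      (mul_pos (by linarith [hy i]) (by linarith [hx j]))]
    linarith [h i j]
  calc c i / (1 - x i) / Dx * (c j / (1 - y j) / Dy)
      = c i * c j / (Dx * Dy) * (1 / ((1 - x i) * (1 - y j))) := by field_simp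
    _ ≤ c i * c j / (Dx * Dy) * (ρ / ((1 - y i) * (1 - x j))) :=
      mul_le_mul_of_nonneg_left key hK
    _ = ρ * (c i / (1 - y i) / Dy * (c j / (1 - x j) / Dx)) := by field_simp

end DFmap

theorem exists_fixedPt_of_hilbertLE_contract {n : ℕ} {S : Set (Fin n → ℝ)}
    {G : (Fin n → ℝ) → Fin n → ℝ} (hS : IsClosed S) (hSΔ : S ⊆ DFsimplex n)
    (hGS : Set.MapsTo G S S) (hGc : ∀ x ∈ S, ContinuousAt G x) {r : ℝ} (hr : r < 1)
    (hG : ∀ x ∈ S, ∀ y ∈ S, ∀ ρ, HilbertLE ρ x y → HilbertLE (1 + r * (ρ - 1)) (G x) (G y))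
    {x₀ : Fin n → ℝ} (hx₀ : x₀ ∈ S) {ρ₀ : ℝ} (h₀ : HilbertLE ρ₀ x₀ (G x₀)) :
    ∃ y ∈ S, G y = y := by
  set X : ℕ → Fin n → ℝ := fun k => G^[k] x₀
  have hXS : ∀ k, X k ∈ S := fun k => hGS.iterate k hx₀
  have hXsucc : ∀ k, G (X k) = X (k + 1) := fun k => (Function.iterate_succ_apply' G k x₀).symm
  have hX : ∀ k, HilbertLE (1 + r ^ k * (ρ₀ - 1)) (X k) (X (k + 1)) := by
    intro k
    induction k with
    | zero => simpa [X] using h₀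
    | succ k ih =>
      have := hG _ (hXS k) _ (hXS (k + 1)) _ ih
      rw [hXsucc, hXsucc] at this
      convert this using 1
      ring
  have hdist : ∀ k, dist (X k) (X (k + 1)) ≤ (ρ₀ - 1) * r ^ k := fun k =>
    ((hX k).dist_le (hSΔ (hXS k)) (hSΔ (hXS (k + 1)))).trans_eq (by ring)
  obtain ⟨y, hy⟩ := cauchySeq_tendsto_of_complete (cauchySeq_of_le_geometric r _ hr hdist)
  have hyS : y ∈ S := hS.mem_of_tendsto hy (Filter.Eventually.of_forall hXS)
  exact ⟨y, hyS, isFixedPt_of_tendsto_iterate hy (hGc y hyS)⟩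

def simplexBox (n : ℕ) (δ b : ℝ) : Set (Fin n → ℝ) :=
  DFsimplex n ∩ Set.univ.pi fun _ => Set.Icc δ b

namespace simplexBox

variable {n : ℕ} {δ b : ℝ}

theorem isClosed : IsClosed (simplexBox n δ b) :=
  (isClosed_stdSimplex ℝ (Fin n)).inter (isClosed_set_pi fun _ _ => isClosed_Icc)

theorem mem_Icc {x : Fin n → ℝ} (hb : b < 1) (hx : x ∈ simplexBox n δ b) (i : Fin n) :
    x i ∈ Set.Icc δ 1 :=
  ⟨(hx.2 i trivial).1, (hx.2 i trivial).2.trans hb.le⟩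

theorem mem_DFsimplexTilde {x : Fin n → ℝ} (hb : b < 1) (hx : x ∈ simplexBox n δ b) :
    x ∈ DFsimplexTilde n :=
  ⟨hx.1, fun i => (hx.2 i trivial).2.trans_lt hb⟩

theorem mapsTo_DFmap {c : Fin n → ℝ} (hc : ∀ j, 0 ≤ c j) (hcs : ∑ j, c j = 1) (hb : b < 1)
    (hδ : ∀ i, δ ≤ c i * (1 - b)) (hcb : ∀ i, c i ≤ b * (1 - c i)) :
    Set.MapsTo (DFmap c) (simplexBox n δ b) (simplexBox n δ b) := fun x hx => by
  have hxb : ∀ i, x i ≤ b := fun i => (hx.2 i trivial).2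
  have hlow := mul_one_sub_le_DFmap hc hcs hx.1 hb hxb
  refine ⟨⟨fun i => (mul_nonneg (hc i) (by linarith)).trans (hlow i),
    sum_DFmap hc hcs (mem_DFsimplexTilde hb hx)⟩, fun i _ => ⟨(hδ i).trans (hlow i), ?_⟩⟩
  exact DFmap_le hc hcs hx.1 hb hxb (hcb i)

end simplexBox

theorem exists_fixedPt_DFmap_comp {n : ℕ} (hn : 3 ≤ n) {c₁ c₂ : Fin n → ℝ} {δ b : ℝ}
    (hc₁ : ∀ j, 0 ≤ c₁ j) (hc₁s : ∑ j, c₁ j = 1) (hc₂ : ∀ j, 0 ≤ c₂ j) (hc₂s : ∑ j, c₂ j = 1)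
    (hδ : 0 < δ) (hb : b < 1) (hδ₁ : ∀ i, δ ≤ c₁ i * (1 - b)) (hδ₂ : ∀ i, δ ≤ c₂ i * (1 - b))
    (hcb₁ : ∀ i, c₁ i ≤ b * (1 - c₁ i)) (hcb₂ : ∀ i, c₂ i ≤ b * (1 - c₂ i))
    {x₀ : Fin n → ℝ} (hx₀ : x₀ ∈ simplexBox n δ b) :
    ∃ y ∈ simplexBox n δ b, DFmap c₂ (DFmap c₁ y) = y := by
  have hF : ∀ c : Fin n → ℝ, (∀ j, 0 ≤ c j) → ∀ x ∈ simplexBox n δ b, ∀ y ∈ simplexBox n δ b,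
      ∀ ρ, HilbertLE ρ x y → HilbertLE (1 + (1 - δ) * (ρ - 1)) (DFmap c x) (DFmap c y) :=
    fun c hc x hx y hy ρ h => hilbertLE_DFmap hc (simplexBox.mem_DFsimplexTilde hb hx).2
      (simplexBox.mem_DFsimplexTilde hb hy).2
      (h.symm.one_sub_contract hn hy.1 hx.1 hδ fun i => (hx.2 i trivial).1)
  have h₁ := simplexBox.mapsTo_DFmap hc₁ hc₁s hb hδ₁ hcb₁
  have h₂ := simplexBox.mapsTo_DFmap hc₂ hc₂s hb hδ₂ hcb₂
  have hδ1 : δ < 1 := (Set.nonempty_Icc.1 ⟨_, hx₀.2 ⟨0, by omega⟩ trivial⟩).trans_lt hb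
  refine exists_fixedPt_of_hilbertLE_contract (r := (1 - δ) ^ 2) simplexBox.isClosed
    Set.inter_subset_left (h₂.comp h₁) (fun x hx => ?_) (by nlinarith) (fun x hx y hy ρ h => ?_)
    hx₀ (hilbertLE_of_mem_Icc hδ (simplexBox.mem_Icc hb hx₀)
      (simplexBox.mem_Icc hb (h₂.comp h₁ hx₀)))
  · exact (continuousAt_DFmap hc₂ hc₂s (simplexBox.mem_DFsimplexTilde hb (h₁ hx))).comp
      (continuousAt_DFmap hc₁ hc₁s (simplexBox.mem_DFsimplexTilde hb hx))
  · convert hF c₂ hc₂ _ (h₁ hx) _ (h₁ hy) _ (hF c₁ hc₁ x hx y hy ρ h) using 1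
    ring

theorem le_div_one_sub_mul_one_sub {c m : ℝ} (hcm : c ≤ m) (hm0 : 0 ≤ m) (hm : m < 1) :
    c ≤ m / (1 - m) * (1 - c) :=
  calc c ≤ m / (1 - m) * (1 - m) := by rwa [div_mul_cancel₀ _ (by linarith)]
    _ ≤ m / (1 - m) * (1 - c) :=
      mul_le_mul_of_nonneg_left (by linarith) (div_nonneg hm0 (by linarith))

/-- Property P4: if c¹ᵢ < 1/2 and c²ᵢ < 1/2 for all i, the composition F_{c²} ∘ F_{c¹}
has at least one fixed point y* ∈ int(Δₙ). -/
theorem stmt_7 (n : ℕ) (hn : 3 ≤ n) (c₁ c₂ : Fin n → ℝ)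
    (hc₁ : ∀ i, 0 < c₁ i) (hc₁sum : ∑ i, c₁ i = 1) (hc₁half : ∀ i, c₁ i < 1 / 2)
    (hc₂ : ∀ i, 0 < c₂ i) (hc₂sum : ∑ i, c₂ i = 1) (hc₂half : ∀ i, c₂ i < 1 / 2) :
    ∃ y ∈ DFsimplexInt n, DFmap c₂ (DFmap c₁ y) = y := by
  have : Nonempty (Fin n) := ⟨⟨0, by omega⟩⟩
  obtain ⟨i₁, hi₁⟩ := Finite.exists_max fun i => max (c₁ i) (c₂ i)
  obtain ⟨i₀, hi₀⟩ := Finite.exists_min fun i => min (c₁ i) (c₂ i)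
  set m := max (c₁ i₁) (c₂ i₁)
  have hm : m < 1 / 2 := max_lt (hc₁half i₁) (hc₂half i₁)
  have hm0 : 0 < m := (hc₁ i₁).trans_le (le_max_left _ _)
  set b := m / (1 - m)
  have hb : b < 1 := by rw [div_lt_one (by linarith)]; linarith
  have hmb : m ≤ b := le_div_self hm0.le (by linarith) (by linarith)
  set δ := min (c₁ i₀) (c₂ i₀) * (1 - b)
  have hδ : 0 < δ := mul_pos (lt_min (hc₁ i₀) (hc₂ i₀)) (by linarith)
  have hc₁m : ∀ i, c₁ i ≤ m := fun i => (le_max_left _ _).trans (hi₁ i)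
  have hδ₁ : ∀ i, δ ≤ c₁ i * (1 - b) := fun i =>
    mul_le_mul_of_nonneg_right ((hi₀ i).trans (min_le_left _ _)) (by linarith)
  have hx₀ : c₁ ∈ simplexBox n δ b := ⟨⟨fun i => (hc₁ i).le, hc₁sum⟩, fun i _ =>
    ⟨(hδ₁ i).trans (mul_le_of_le_one_right (hc₁ i).le (by linarith)), (hc₁m i).trans hmb⟩⟩
  obtain ⟨y, hy, hfix⟩ := exists_fixedPt_DFmap_comp hn (fun j => (hc₁ j).le) hc₁sum
    (fun j => (hc₂ j).le) hc₂sum hδ hb hδ₁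
    (fun i => mul_le_mul_of_nonneg_right ((hi₀ i).trans (min_le_right _ _)) (by linarith))
    (fun i => le_div_one_sub_mul_one_sub (hc₁m i) hm0.le (by linarith))
    (fun i => le_div_one_sub_mul_one_sub ((le_max_right _ _).trans (hi₁ i)) hm0.le
      (by linarith)) hx₀
  exact ⟨y, ⟨hy.1, fun i => hδ.trans_le (hy.2 i trivial).1⟩, hfix⟩
end

section
/- (Theorem 1, part (ii), ordering of social power) Suppose c_i < 1/2 for all i, and let x* ∈ Δ̃_n be a fixed point of F_c, i.e. F_c(x*) = x*. Then for all indices i, j: x*_i < x*_j if and only if c_i < c_j, and x*_i = x*_j if and only if c_i = c_j. -/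
open scoped Classical BigOperators

/-! At a fixed point in Δ̃ₙ we have `xᵢ (1 - xᵢ) = α cᵢ` with `α > 0`, so every `xᵢ > 0`; as `n ≥ 3`,
any two coordinates then sum to less than `1`. Since
`xⱼ (1 - xⱼ) - xᵢ (1 - xᵢ) = (xⱼ - xᵢ)(1 - xᵢ - xⱼ)`, the map `t ↦ t (1 - t)` preserves the order of
such a pair, hence the order of `x` is that of `c`. -/

lemma mul_one_sub_lt_mul_one_sub_iff {a b : ℝ} (hab : a + b < 1) :
    a * (1 - a) < b * (1 - b) ↔ a < b := by
  have hfactor : b * (1 - b) - a * (1 - a) = (b - a) * (1 - a - b) := by ring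
  constructor <;> intro h <;> nlinarith

lemma add_lt_one_of_mem_DFsimplexInt {n : ℕ} (hn : 3 ≤ n) {x : Fin n → ℝ}
    (hx : x ∈ DFsimplexInt n) {i j : Fin n} (hij : i ≠ j) : x i + x j < 1 := by
  obtain ⟨⟨hnonneg, hsum⟩, hpos⟩ := hx
  obtain ⟨k, hki, hkj⟩ := Fin.exists_ne_and_ne_of_two_lt i j (by omega)
  calc x i + x j = ∑ m ∈ {i, j}, x m := (Finset.sum_pair hij).symm
    _ < ∑ m, x m :=
      Finset.sum_lt_sum_of_subset (Finset.subset_univ _) (Finset.mem_univ k)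
        (by simp [hki, hkj]) (hpos k) (fun m _ _ => hnonneg m)
    _ = 1 := hsum

section FixedPoint

variable {n : ℕ} {c x : Fin n → ℝ}

lemma DFmap_eq_of_forall_lt_one (hx : ∀ i, x i < 1) :
    DFmap c x = fun i => DFalpha c x * (c i / (1 - x i)) := by
  have hnot_vertex : ¬ ∃ i, x = Pi.single i 1 := by
    rintro ⟨i, rfl⟩
    simpa using hx i
  rw [DFmap, if_neg hnot_vertex]

lemma DFalpha_pos [NeZero n] (hc : ∀ i, 0 < c i) (hx : ∀ i, x i < 1) : 0 < DFalpha c x :=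
  inv_pos.mpr <| Finset.sum_pos (fun j _ => div_pos (hc j) (sub_pos.mpr (hx j)))
    Finset.univ_nonempty

variable (hx : ∀ i, x i < 1) (hfix : DFmap c x = x)
include hx hfix

lemma mul_one_sub_eq_of_DFmap_eq_self (i : Fin n) : x i * (1 - x i) = DFalpha c x * c i := by
  have h := congrFun hfix i
  rw [DFmap_eq_of_forall_lt_one hx] at h
  field_simp [(sub_pos.mpr (hx i)).ne'] at h
  linarith

lemma pos_of_DFmap_eq_self (hc : ∀ i, 0 < c i) (i : Fin n) : 0 < x i := by
  have : NeZero n := ⟨fun h => (h ▸ i).elim0⟩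
  rw [← congrFun hfix i, DFmap_eq_of_forall_lt_one hx]
  exact mul_pos (DFalpha_pos hc hx) (div_pos (hc i) (sub_pos.mpr (hx i)))

end FixedPoint

theorem stmt_16_general (n : ℕ) (hn : 3 ≤ n) (c : Fin n → ℝ)
    (hc : ∀ i, 0 < c i)
    (xs : Fin n → ℝ) (hxs : xs ∈ DFsimplexTilde n) (hfix : DFmap c xs = xs) :
    ∀ i j : Fin n, (xs i < xs j ↔ c i < c j) ∧ (xs i = xs j ↔ c i = c j) := by
  obtain ⟨hsimplex, hlt⟩ := hxs
  have hint : xs ∈ DFsimplexInt n := ⟨hsimplex, pos_of_DFmap_eq_self hlt hfix hc⟩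
  have hα : 0 < DFalpha c xs := by
    have : NeZero n := ⟨by omega⟩
    exact DFalpha_pos hc hlt
  have hlt_iff : ∀ i j, i ≠ j → (xs i < xs j ↔ c i < c j) := fun i j hij => by
    rw [← mul_one_sub_lt_mul_one_sub_iff (add_lt_one_of_mem_DFsimplexInt hn hint hij),
      mul_one_sub_eq_of_DFmap_eq_self hlt hfix, mul_one_sub_eq_of_DFmap_eq_self hlt hfix,
      mul_lt_mul_iff_right₀ hα]
  intro i j
  rcases eq_or_ne i j with rfl | hij
  · simp
  · refine ⟨hlt_iff i j hij, ?_⟩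
    rw [le_antisymm_iff, le_antisymm_iff, ← not_lt, ← not_lt, ← not_lt, ← not_lt,
      hlt_iff i j hij, hlt_iff j i hij.symm]

/-- Theorem 1, part (ii): if cᵢ < 1/2 for all i and x* ∈ Δ̃ₙ is a fixed point of Fᶜ,
then x*ᵢ < x*ⱼ ⇔ cᵢ < cⱼ and x*ᵢ = x*ⱼ ⇔ cᵢ = cⱼ. -/
theorem stmt_16 (n : ℕ) (hn : 3 ≤ n) (c : Fin n → ℝ)
    (hc : ∀ i, 0 < c i) (hcsum : ∑ i, c i = 1) (hchalf : ∀ i, c i < 1 / 2)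
    (xs : Fin n → ℝ) (hxs : xs ∈ DFsimplexTilde n) (hfix : DFmap c xs = xs) :
    ∀ i j : Fin n, (xs i < xs j ↔ c i < c j) ∧ (xs i = xs j ↔ c i = c j) :=
  stmt_16_general n hn c hc xs hxs hfix
end
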